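/- arXiv:1011.0266 — 2 statements merged into one kernel-verified Lean document; each statement's English description precedes it below -/
import Mathlib

section
/- Let λ > 0 and β ≥ 0. If h ∈ ℝ^d satisfies 𝔞*_λ(h) < 1, then Σ_{x∈ℤ^d} e^{h·x} A_λ(x) < ∞. Analogously, with V bounded, if 𝔮*_λ(h) < 1 then ℙ-almost surely Σ_{x∈ℤ^d} e^{h·x} Q_λ(x) < ∞. -/
open MeasureTheory ProbabilityTheory Real Filter Topology
open scoped ENNReal NNReal BigOperators Classical

noncomputable section

/-- A polymer: a nearest-neighbour path in `ℤ^d` of length `len`, started at the origin,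
frozen after time `len`. -/
structure Polymer (d : ℕ) where
  len : ℕ
  path : ℕ → Fin d → ℤ
  start : path 0 = 0
  step : ∀ i, i < len → (∑ j, |path (i + 1) j - path i j|) = 1
  frozen : ∀ i, len ≤ i → path i = path len

namespace Polymer

variable {d : ℕ}

/-- The spatial extension `X(γ) = γ_{|γ|}`. -/
def X (γ : Polymer d) : Fin d → ℤ := γ.path γ.len

/-- The local time of `γ` at `x`: the number of visits of `x` by `(γ_1, …, γ_{|γ|})`. -/
def localTime (γ : Polymer d) (x : Fin d → ℤ) : ℕ :=
  ((Finset.Icc 1 γ.len).filter fun i => γ.path i = x).card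

end Polymer

/-- Scalar product `h ⬝ x` between `h ∈ ℝ^d` and a lattice point `x ∈ ℤ^d`. -/
def dotZ {d : ℕ} (h : Fin d → ℝ) (x : Fin d → ℤ) : ℝ := ∑ j, h j * (x j : ℝ)

/-- Scalar product of two vectors of `ℝ^d`. -/
def dotR {d : ℕ} (h u : Fin d → ℝ) : ℝ := ∑ j, h j * u j

/-- Euclidean norm of a lattice point. -/
def znorm {d : ℕ} (x : Fin d → ℤ) : ℝ := Real.sqrt (∑ j, ((x j : ℝ)) ^ 2)

/-- Euclidean norm on `ℝ^d`. -/
def enorm' {d : ℕ} (u : Fin d → ℝ) : ℝ := Real.sqrt (∑ j, (u j) ^ 2)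

/-- Embedding of `ℤ^d` in `ℝ^d`. -/
def toR {d : ℕ} (x : Fin d → ℤ) : Fin d → ℝ := fun j => (x j : ℝ)

/-- The quenched weight `q_{λ,h}^β(γ)` of a polymer `γ` in the (frozen) environment `v`:
`exp(h·X(γ) − λ|γ| − β ∑_{i=1}^{|γ|} v(γ_i)) (2d)^{-|γ|}`. -/
def qweight {d : ℕ} (β lam : ℝ) (h : Fin d → ℝ) (v : (Fin d → ℤ) → ℝ) (γ : Polymer d) : ℝ≥0∞ :=
  ENNReal.ofReal
    (Real.exp (dotZ h γ.X - lam * γ.len - β * ∑ i ∈ Finset.Icc 1 γ.len, v (γ.path i)) *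
      (1 / (2 * d : ℝ)) ^ γ.len)

/-- The quenched point-to-point partition function `Q_λ(x)` (with `h = 0`). -/
def Qpart {d : ℕ} (β lam : ℝ) (v : (Fin d → ℤ) → ℝ) (x : Fin d → ℤ) : ℝ≥0∞ :=
  ∑' γ : {γ : Polymer d // γ.X = x}, qweight β lam 0 v γ

/-- The quenched point-to-point partition function restricted to a set `E` of polymers. -/
def QpartE {d : ℕ} (β lam : ℝ) (v : (Fin d → ℤ) → ℝ) (x : Fin d → ℤ)
    (E : Set (Polymer d)) : ℝ≥0∞ :=
  ∑' γ : {γ : Polymer d // γ.X = x ∧ γ ∈ E}, qweight β lam 0 v γ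

/-- The quenched point-to-point partition function `A_{λ,n}(x)`-style, with fixed length `n`. -/
def QpartLenPt {d : ℕ} (β lam : ℝ) (v : (Fin d → ℤ) → ℝ) (n : ℕ) (x : Fin d → ℤ) : ℝ≥0∞ :=
  ∑' γ : {γ : Polymer d // γ.len = n ∧ γ.X = x}, qweight β lam 0 v γ

/-- The quenched fixed-length partition function `Q_n(h)`. -/
def QpartLen {d : ℕ} (β : ℝ) (h : Fin d → ℝ) (v : (Fin d → ℤ) → ℝ) (n : ℕ) : ℝ≥0∞ :=
  ∑' γ : {γ : Polymer d // γ.len = n}, qweight β 0 h v γ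

/-- The quenched fixed-length partition function restricted to a set `E` of polymers. -/
def QpartLenE {d : ℕ} (β : ℝ) (h : Fin d → ℝ) (v : (Fin d → ℤ) → ℝ) (n : ℕ)
    (E : Set (Polymer d)) : ℝ≥0∞ :=
  ∑' γ : {γ : Polymer d // γ.len = n ∧ γ ∈ E}, qweight β 0 h v γ

/-- The quenched polymer measure `ℚ_n^h(E)` of a set `E` of polymers of length `n`. -/
def Qmeas {d : ℕ} (β : ℝ) (h : Fin d → ℝ) (v : (Fin d → ℤ) → ℝ) (n : ℕ)
    (E : Set (Polymer d)) : ℝ≥0∞ :=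
  QpartLenE β h v n E / QpartLen β h v n

/-- The standing assumptions on the random environment `{V(x)}_{x ∈ ℤ^d}`: a family of
i.i.d. non-degenerate non-negative bounded random variables with `0` in the support. -/
structure Environment (d : ℕ) {Ω : Type*} [MeasurableSpace Ω] (Pr : Measure Ω) where
  V : (Fin d → ℤ) → Ω → ℝ
  meas : ∀ x, Measurable (V x)
  nonneg : ∀ x ω, 0 ≤ V x ω
  bounded : ∃ M : ℝ, ∀ x ω, V x ω ≤ M
  indep : iIndepFun V Pr
  ident : ∀ x y, IdentDistrib (V x) (V y) Pr Pr
  nondeg : ∀ x (c : ℝ), ¬ (∀ᵐ ω ∂Pr, V x ω = c)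
  zeroSupp : ∀ x, ∀ ε : ℝ, 0 < ε → 0 < Pr {ω | V x ω < ε}

variable {Ω : Type*} [MeasurableSpace Ω]

/-- The annealed point-to-point partition function `A_λ(x) = 𝔼 Q_λ(x)`. -/
def Apart {d : ℕ} (Pr : Measure Ω) (env : Environment d Pr) (β lam : ℝ)
    (x : Fin d → ℤ) : ℝ≥0∞ :=
  ∫⁻ ω, Qpart β lam (fun z => env.V z ω) x ∂Pr

/-- The annealed point-to-point partition function restricted to a set `E` of polymers. -/
def ApartE {d : ℕ} (Pr : Measure Ω) (env : Environment d Pr) (β lam : ℝ)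
    (x : Fin d → ℤ) (E : Set (Polymer d)) : ℝ≥0∞ :=
  ∫⁻ ω, QpartE β lam (fun z => env.V z ω) x E ∂Pr

/-- The annealed fixed-length point-to-point partition function `A_{λ,n}(x)`. -/
def ApartLenPt {d : ℕ} (Pr : Measure Ω) (env : Environment d Pr) (β lam : ℝ)
    (n : ℕ) (x : Fin d → ℤ) : ℝ≥0∞ :=
  ∫⁻ ω, QpartLenPt β lam (fun z => env.V z ω) n x ∂Pr

/-- The annealed fixed-length partition function `A_n(h) = 𝔼 Q_n(h)`. -/
def ApartLen {d : ℕ} (Pr : Measure Ω) (env : Environment d Pr) (β : ℝ)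
    (h : Fin d → ℝ) (n : ℕ) : ℝ≥0∞ :=
  ∫⁻ ω, QpartLen β h (fun z => env.V z ω) n ∂Pr

/-- The annealed fixed-length partition function restricted to a set `E`. -/
def ApartLenE {d : ℕ} (Pr : Measure Ω) (env : Environment d Pr) (β : ℝ)
    (h : Fin d → ℝ) (n : ℕ) (E : Set (Polymer d)) : ℝ≥0∞ :=
  ∫⁻ ω, QpartLenE β h (fun z => env.V z ω) n E ∂Pr

/-- The annealed polymer measure `𝔸_n^h(E)` on polymers of length `n`. -/
def AmeasLen {d : ℕ} (Pr : Measure Ω) (env : Environment d Pr) (β : ℝ)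
    (h : Fin d → ℝ) (n : ℕ) (E : Set (Polymer d)) : ℝ≥0∞ :=
  ApartLenE Pr env β h n E / ApartLen Pr env β h n

/-- The annealed polymer measure `𝔸_λ^x(E)` on polymers from `0` to `x`. -/
def AmeasPt {d : ℕ} (Pr : Measure Ω) (env : Environment d Pr) (β lam : ℝ)
    (x : Fin d → ℤ) (E : Set (Polymer d)) : ℝ≥0∞ :=
  ApartE Pr env β lam x E / Apart Pr env β lam x

/-- `a` is the annealed Lyapunov exponent `𝔞_λ` (viewed as a function on `ℝ^d`, through its
values on lattice points). -/
def IsAnnealedLyapunov {d : ℕ} (Pr : Measure Ω) (env : Environment d Pr) (β lam : ℝ)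
    (a : (Fin d → ℝ) → ℝ) : Prop :=
  ∀ x : Fin d → ℤ,
    Tendsto (fun N : ℕ => -(1 / (N : ℝ)) * Real.log (Apart Pr env β lam (N • x)).toReal)
      atTop (𝓝 (a (toR x)))

/-- `q` is the (deterministic) quenched Lyapunov exponent `𝔮_λ` (viewed as a function on
`ℝ^d`, through its values on lattice points). -/
def IsQuenchedLyapunov {d : ℕ} (Pr : Measure Ω) (env : Environment d Pr) (β lam : ℝ)
    (q : (Fin d → ℝ) → ℝ) : Prop :=
  ∀ᵐ ω ∂Pr, ∀ x : Fin d → ℤ,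
    Tendsto (fun N : ℕ => -(1 / (N : ℝ)) * Real.log (Qpart β lam (fun z => env.V z ω) (N • x)).toReal)
      atTop (𝓝 (q (toR x)))

/-- `a` is a norm on `ℝ^d`, equivalent to the Euclidean norm. -/
def IsEquivNorm {d : ℕ} (a : (Fin d → ℝ) → ℝ) : Prop :=
  (∀ u v, a (u + v) ≤ a u + a v) ∧ (∀ (c : ℝ) (u), a (c • u) = |c| * a u) ∧
  (∃ C : ℝ, 0 < C ∧ ∀ u, C⁻¹ * enorm' u ≤ a u ∧ a u ≤ C * enorm' u)

/-- The polar norm `a*(h) = sup_{u ≠ 0} h·u / a(u)`. -/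
def polar {d : ℕ} (a : (Fin d → ℝ) → ℝ) (h : Fin d → ℝ) : ℝ :=
  ⨆ u : {u : Fin d → ℝ // u ≠ 0}, dotR h u.1 / a u.1

/-!
Both `f = A_λ` and `f = Q_λ(ω)` are finite, satisfy `f x ≤ e^K f (x + s)` for every unit step `s`
(append `s` to every path ending at `x`), and decay along every lattice ray `N ↦ N z` at the
exponential rate `b z`, where `b` is the Lyapunov exponent. Approximating the direction of a
far-away `x` by one of the finitely many lattice points `z` with `‖z‖_∞ ≤ R`, and paying
`e^{K ‖x - m z‖₁}` to move from `m z` to `x`, turns the ray-wise decay into the uniform bound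
`f x ≤ A e^{-b x + δ ‖x‖₁}` for every `δ > 0`. Since `h · x ≤ b^*(h) b x` and `b` dominates a
multiple of `‖·‖₁`, the series `∑ₓ e^{h · x} f x` is then dominated by a product of geometric
series as soon as `b^*(h) < 1`.
-/

section LatticeL1

variable {d : ℕ}

def l1 (x : Fin d → ℤ) : ℕ := ∑ j, (x j).natAbs

lemma eq_zero_of_l1_eq_zero {x : Fin d → ℤ} (hx : l1 x = 0) : x = 0 := by
  funext j
  simpa using Finset.sum_eq_zero_iff.mp hx j (Finset.mem_univ j)

lemma l1_neg (x : Fin d → ℤ) : l1 (-x) = l1 x := by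
  simp [l1]

lemma natAbs_le_l1 (x : Fin d → ℤ) (j : Fin d) : (x j).natAbs ≤ l1 x :=
  Finset.single_le_sum (f := fun j => (x j).natAbs) (fun _ _ => Nat.zero_le _) (Finset.mem_univ j)

lemma cast_l1 (x : Fin d → ℤ) : (l1 x : ℝ) = ∑ j, |toR x j| := by
  simp [l1, toR, Nat.cast_natAbs]

lemma toR_sub (x y : Fin d → ℤ) : toR (x - y) = toR x - toR y := by
  funext j
  simp [toR]

lemma toR_nsmul (m : ℕ) (x : Fin d → ℤ) : toR (m • x) = (m : ℝ) • toR x := by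
  funext j
  simp [toR]

lemma exists_unit_step_of_l1_eq_succ {w : Fin d → ℤ} {n : ℕ} (hw : l1 w = n + 1) :
    ∃ s : Fin d → ℤ, ∑ j, |s j| = 1 ∧ l1 (w - s) = n := by
  obtain ⟨j, hj⟩ : ∃ j, w j ≠ 0 := by
    by_contra! h
    simp [show w = 0 from funext h, l1] at hw
  have hsign : |(w j).sign| = 1 ∧ ((w j - (w j).sign).natAbs + 1 = (w j).natAbs) := by
    rcases hj.lt_or_gt with h | h
    · rw [Int.sign_eq_neg_one_of_neg h]; exact ⟨rfl, by omega⟩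
    · rw [Int.sign_eq_one_of_pos h]; exact ⟨rfl, by omega⟩
  refine ⟨Pi.single j (w j).sign, ?_, ?_⟩
  · rw [Finset.sum_eq_single j (fun k _ hk => by simp [hk]) (by simp)]
    simpa using hsign.1
  · have hcoord : ∀ k, ((w - Pi.single j (w j).sign : Fin d → ℤ) k).natAbs
        + (if k = j then 1 else 0) = (w k).natAbs := by
      intro k
      by_cases hk : k = j
      · subst hk
        simpa using hsign.2
      · simp [hk]
    have := Finset.sum_congr rfl fun k (_ : k ∈ Finset.univ) => hcoord k
    rw [Finset.sum_add_distrib, Finset.sum_ite_eq'] at this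
    simp only [Finset.mem_univ, if_true] at this
    unfold l1 at hw ⊢
    omega

lemma summable_exp_neg_mul_abs {c : ℝ} (hc : 0 < c) :
    Summable fun k : ℤ => exp (-(c * |(k : ℝ)|)) := by
  have hgeom : Summable fun n : ℕ => exp (-c) ^ n :=
    summable_geometric_of_lt_one (exp_nonneg _) (exp_lt_one_iff.mpr (neg_lt_zero.mpr hc))
  refine .of_nat_of_neg ?_ ?_ <;> refine hgeom.congr fun n => ?_ <;>
    simp [← exp_nat_mul, mul_comm]

lemma summable_exp_neg_mul_l1 {c : ℝ} (hc : 0 < c) :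
    Summable fun x : Fin d → ℤ => exp (-(c * l1 x)) := by
  set g : ℤ → ℝ := fun k => exp (-(c * |(k : ℝ)|))
  have hprod : ∀ x : Fin d → ℤ, exp (-(c * l1 x)) = ∏ j, g (x j) := by
    intro x
    simp only [g, cast_l1, toR, Finset.mul_sum, ← Finset.sum_neg_distrib, exp_sum]
  simp_rw [hprod]
  refine summable_of_sum_le (c := (∑' k, g k) ^ d) (fun x => by positivity) fun u => ?_
  set t : Finset ℤ := u.biUnion fun x => Finset.univ.image x
  have hut : u ⊆ Fintype.piFinset fun _ => t := fun x hx =>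
    Fintype.mem_piFinset.mpr fun j => Finset.mem_biUnion.mpr ⟨x, hx, by simp⟩
  calc ∑ x ∈ u, ∏ j, g (x j)
      ≤ ∑ x ∈ Fintype.piFinset fun _ => t, ∏ j, g (x j) :=
        Finset.sum_le_sum_of_subset_of_nonneg hut fun _ _ _ => by positivity
    _ = ∏ _j : Fin d, ∑ k ∈ t, g k := Finset.sum_prod_piFinset t fun _ => g
    _ ≤ ∏ _j : Fin d, ∑' k, g k := Finset.prod_le_prod (fun _ _ => by positivity)
        fun _ _ => (summable_exp_neg_mul_abs hc).sum_le_tsum t fun _ _ => by positivity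
    _ = (∑' k, g k) ^ d := by simp

lemma exists_near_multiple (R : ℕ) (hR : 0 < R) (x : Fin d → ℤ) :
    ∃ z : Fin d → ℤ, (∀ j, |z j| ≤ R) ∧ R * l1 ((l1 x / R) • z - x) ≤ d * (R * R + l1 x) := by
  rcases Nat.eq_zero_or_pos (l1 x) with hn | hn
  · obtain rfl := eq_zero_of_l1_eq_zero hn
    exact ⟨0, fun j => by simp, by simp [l1]⟩
  set n := l1 x
  set m := n / R
  -- `R * (m * z j - x j) = -((n % R) * z j + (R * x j) % n)`, with both remainders small
  have hcoord : ∀ j, |R * x j / n| ≤ R ∧ R * |m * (R * x j / n) - x j| ≤ R * R + n := by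
    intro j
    have hx : |x j| ≤ n := by rw [Int.abs_eq_natAbs]; exact_mod_cast natAbs_le_l1 x j
    have hdiv := Int.mul_ediv_add_emod (R * x j) n
    have hr0 := Int.emod_nonneg (R * x j) (b := n) (by positivity)
    have hrn := Int.emod_lt_of_pos (R * x j) (b := n) (by positivity)
    have hmR : (R * m + n % R : ℤ) = n := by exact_mod_cast Nat.div_add_mod n R
    have hsR : (n % R : ℤ) < R := by exact_mod_cast Nat.mod_lt n hR
    set q := R * x j / n
    set r := R * x j % n
    have hq : |q| ≤ R := by
      rw [abs_le] at hx ⊢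
      constructor
      · have : (n : ℤ) * (-R) < n * (q + 1) := by nlinarith
        linarith [lt_of_mul_lt_mul_left this (by positivity : (0 : ℤ) ≤ n)]
      · exact le_of_mul_le_mul_left (by nlinarith : (n : ℤ) * q ≤ n * R) (by positivity)
    refine ⟨hq, ?_⟩
    have hkey : (R : ℤ) * (m * q - x j) = -((n % R : ℕ) * q + r) := by
      push_cast; linear_combination q * hmR + hdiv
    calc (R : ℤ) * |m * q - x j| = |(n % R : ℕ) * q + r| := by
          rw [← abs_of_nonneg (by positivity : (0 : ℤ) ≤ R), ← abs_mul, hkey, abs_neg]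
      _ ≤ |((n % R : ℕ) : ℤ) * q| + |r| := abs_add_le _ _
      _ = (n % R : ℕ) * |q| + r := by rw [abs_mul, abs_of_nonneg hr0, Nat.abs_cast]
      _ ≤ R * R + n := by push_cast; nlinarith [abs_nonneg q]
  refine ⟨fun j => R * x j / n, fun j => (hcoord j).1, ?_⟩
  zify
  simp only [l1, Nat.cast_sum, Nat.cast_natAbs, Finset.mul_sum]
  calc ∑ j, (R : ℤ) * |((m • fun j => R * x j / n) - x) j|
      ≤ ∑ _j : Fin d, ((R : ℤ) * R + n) := Finset.sum_le_sum fun j _ => by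
        simpa [nsmul_eq_mul] using (hcoord j).2
    _ = d * (R * R + n) := by simp

end LatticeL1

section EquivNorm

variable {d : ℕ}

lemma abs_le_enorm' (u : Fin d → ℝ) (j : Fin d) : |u j| ≤ enorm' u := by
  rw [← sqrt_sq_eq_abs]
  exact sqrt_le_sqrt (Finset.single_le_sum (f := fun j => u j ^ 2) (fun _ _ => sq_nonneg _)
    (Finset.mem_univ j))

lemma enorm'_le_sum_abs (u : Fin d → ℝ) : enorm' u ≤ ∑ j, |u j| := by
  rw [enorm', sqrt_le_left (Finset.sum_nonneg fun _ _ => abs_nonneg _)]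
  simp_rw [← sq_abs (u _)]
  exact Finset.sum_sq_le_sq_sum_of_nonneg fun _ _ => abs_nonneg _

lemma sum_abs_le_mul_enorm' (u : Fin d → ℝ) : ∑ j, |u j| ≤ d * enorm' u := by
  simpa using Finset.sum_le_card_nsmul Finset.univ _ _ fun j _ => abs_le_enorm' u j

lemma dotR_le_sum_abs_mul_sum_abs (h u : Fin d → ℝ) :
    dotR h u ≤ (∑ j, |h j|) * ∑ j, |u j| := by
  rw [dotR, Finset.sum_mul]
  refine Finset.sum_le_sum fun j _ => ?_
  calc h j * u j ≤ |h j| * |u j| := by rw [← abs_mul]; exact le_abs_self _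
    _ ≤ |h j| * ∑ k, |u k| := mul_le_mul_of_nonneg_left
        (Finset.single_le_sum (f := fun k => |u k|) (fun _ _ => abs_nonneg _) (Finset.mem_univ j))
        (abs_nonneg _)

namespace IsEquivNorm

variable {b : (Fin d → ℝ) → ℝ}

lemma map_zero (hb : IsEquivNorm b) : b 0 = 0 := by
  simpa using hb.2.1 0 0

lemma exists_sum_abs_le (hb : IsEquivNorm b) :
    ∃ C, 0 < C ∧ ∀ u, ∑ j, |u j| ≤ C * b u ∧ b u ≤ C * ∑ j, |u j| := by
  obtain ⟨-, -, C, hC, hCb⟩ := hb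
  refine ⟨C * (d + 1), by positivity, fun u => ⟨?_, ?_⟩⟩
  · calc ∑ j, |u j| ≤ d * enorm' u := sum_abs_le_mul_enorm' u
      _ ≤ (d + 1) * enorm' u := by
        gcongr; exacts [sqrt_nonneg _, le_add_of_nonneg_right zero_le_one]
      _ = C * (d + 1) * (C⁻¹ * enorm' u) := by field_simp
      _ ≤ C * (d + 1) * b u := by gcongr; exact (hCb u).1
  · calc b u ≤ C * enorm' u := (hCb u).2
      _ ≤ C * (d + 1) * ∑ j, |u j| := by
        rw [mul_assoc]
        gcongr
        calc enorm' u ≤ ∑ j, |u j| := enorm'_le_sum_abs u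
          _ ≤ (d + 1) * ∑ j, |u j| := le_mul_of_one_le_left
            (Finset.sum_nonneg fun _ _ => abs_nonneg _) (by linarith [d.cast_nonneg (α := ℝ)])

lemma pos (hb : IsEquivNorm b) {u : Fin d → ℝ} (hu : u ≠ 0) : 0 < b u := by
  obtain ⟨C, hC, hCb⟩ := hb.exists_sum_abs_le
  obtain ⟨j, hj⟩ := Function.ne_iff.mp hu
  have : 0 < ∑ j, |u j| := lt_of_lt_of_le (abs_pos.mpr hj)
    (Finset.single_le_sum (f := fun k => |u k|) (fun _ _ => abs_nonneg _) (Finset.mem_univ j))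
  exact pos_of_mul_pos_right (this.trans_le (hCb u).1) hC.le

lemma dotR_le_polar_mul (hb : IsEquivNorm b) (h u : Fin d → ℝ) :
    dotR h u ≤ polar b h * b u := by
  rcases eq_or_ne u 0 with rfl | hu
  · simp [dotR, hb.map_zero]
  obtain ⟨C, hC, hCb⟩ := hb.exists_sum_abs_le
  have hbdd : BddAbove (Set.range fun v : {v : Fin d → ℝ // v ≠ 0} => dotR h v.1 / b v.1) := by
    refine ⟨(∑ j, |h j|) * C, Set.forall_mem_range.mpr fun v => ?_⟩
    rw [div_le_iff₀ (hb.pos v.2), mul_assoc]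
    exact (dotR_le_sum_abs_mul_sum_abs h v.1).trans
      (mul_le_mul_of_nonneg_left (hCb v.1).1 (Finset.sum_nonneg fun _ _ => abs_nonneg _))
  rw [← div_le_iff₀ (hb.pos hu)]
  exact le_ciSup hbdd (⟨u, hu⟩ : {v : Fin d → ℝ // v ≠ 0})

end IsEquivNorm

end EquivNorm

section Summability

variable {d : ℕ} {g : (Fin d → ℤ) → ℝ} {b : (Fin d → ℝ) → ℝ} {K C δ : ℝ}

lemma le_exp_mul_l1_mul_of_unit_step
    (hstep : ∀ x s, ∑ j, |s j| = 1 → g x ≤ exp K * g (x + s)) (x w : Fin d → ℤ) :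
    g x ≤ exp (K * l1 w) * g (x + w) := by
  induction hn : l1 w generalizing x w with
  | zero => simp [eq_zero_of_l1_eq_zero hn]
  | succ n ih =>
    obtain ⟨s, hs, hws⟩ := exists_unit_step_of_l1_eq_succ hn
    calc g x ≤ exp K * g (x + s) := hstep x s hs
      _ ≤ exp K * (exp (K * n) * g (x + s + (w - s))) := by gcongr; exact ih _ _ hws
      _ = exp (K * ↑(n + 1)) * g (x + w) := by
        rw [← mul_assoc, ← exp_add, add_add_sub_cancel]; push_cast; ring_nf

lemma eventually_le_exp_of_tendsto {u : ℕ → ℝ} {a a' : ℝ}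
    (hu : Tendsto (fun N : ℕ => -(1 / (N : ℝ)) * log (u N)) atTop (𝓝 a)) (ha : a' < a) :
    ∀ᶠ N : ℕ in atTop, u N ≤ exp (-(N * a')) := by
  filter_upwards [hu.eventually (eventually_gt_nhds ha), eventually_gt_atTop 0] with N hN hN0
  have hN0' : (0 : ℝ) < N := Nat.cast_pos.mpr hN0
  have hlog : log (u N) < -(N * a') := by
    rw [neg_mul, lt_neg, one_div, inv_mul_lt_iff₀ hN0'] at hN
    linarith
  exact (le_abs_self _).trans ((le_exp_log _).trans (by rw [log_abs]; exact exp_le_exp.mpr hlog.le))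

lemma le_exp_of_near_ray (hK : 0 ≤ K) (hC : 0 ≤ C) (hδ : 0 ≤ δ)
    (hlip : ∀ x w, g x ≤ exp (K * l1 w) * g (x + w))
    (hb : IsEquivNorm b) (hbC : ∀ u, b u ≤ C * ∑ j, |u j|)
    {R N₀ : ℕ} (hR : 0 < R) (hRδ : (K + C) * d ≤ δ / 2 * R)
    (hray : ∀ m, N₀ ≤ m → ∀ z : Fin d → ℤ, (∀ j, |z j| ≤ R) →
      g (m • z) ≤ exp (-(m * (b (toR z) - δ / 2))))
    {x : Fin d → ℤ} (hx : N₀ * R ≤ l1 x) :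
    g x ≤ exp ((K + C) * d * R) * exp (-b (toR x) + δ * l1 x) := by
  obtain ⟨z, hzR, hL⟩ := exists_near_multiple R hR x
  set n := l1 x
  set m := n / R
  set L := l1 (m • z - x)
  have hm : N₀ ≤ m := (Nat.le_div_iff_mul_le hR).2 hx
  have hmn : (m : ℝ) ≤ n := Nat.cast_le.2 (Nat.div_le_self _ _)
  have hLR : (R : ℝ) * L ≤ d * (R * R + n) := by exact_mod_cast hL
  have hbx : b (toR x) ≤ m * b (toR z) + C * L := by
    calc b (toR x) = b (toR (m • z) + toR (x - m • z)) := by rw [toR_sub]; abel_nf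
      _ ≤ b (toR (m • z)) + b (toR (x - m • z)) := hb.1 _ _
      _ ≤ m * b (toR z) + C * L := by
        rw [toR_nsmul, hb.2.1, abs_of_nonneg m.cast_nonneg]
        gcongr
        calc b (toR (x - m • z)) ≤ C * ∑ j, |toR (x - m • z) j| := hbC _
          _ = C * L := by rw [← cast_l1, ← l1_neg, neg_sub]
  have hKC : (K + C) * L ≤ (K + C) * d * R + δ / 2 * n := by
    refine le_of_mul_le_mul_left ?_ (Nat.cast_pos.2 hR : (0 : ℝ) < R)
    nlinarith [mul_le_mul_of_nonneg_left hLR (add_nonneg hK hC),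
      mul_le_mul_of_nonneg_right hRδ n.cast_nonneg]
  calc g x ≤ exp (K * L) * g (m • z) := by simpa only [add_sub_cancel] using hlip x (m • z - x)
    _ ≤ exp (K * L) * exp (-(m * (b (toR z) - δ / 2))) := by gcongr; exact hray m hm z hzR
    _ ≤ exp ((K + C) * d * R) * exp (-b (toR x) + δ * n) := by
      rw [← exp_add, ← exp_add]
      exact exp_le_exp.2 (by nlinarith [mul_le_mul_of_nonneg_left hmn hδ])

theorem exists_le_mul_exp_of_lyapunov (hK : 0 ≤ K) (hg : ∀ x, 0 ≤ g x)
    (hlip : ∀ x w, g x ≤ exp (K * l1 w) * g (x + w)) (hb : IsEquivNorm b)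
    (hlyap : ∀ z, Tendsto (fun N : ℕ => -(1 / (N : ℝ)) * log (g (N • z))) atTop
      (𝓝 (b (toR z))))
    (hδ : 0 < δ) : ∃ A, ∀ x, g x ≤ A * exp (-b (toR x) + δ * l1 x) := by
  obtain ⟨C, hC, hCb⟩ := hb.exists_sum_abs_le
  obtain ⟨R, hR⟩ := exists_nat_gt ((K + C) * d / (δ / 2))
  have hR0 : 0 < R := Nat.cast_pos.1 (lt_of_le_of_lt (by positivity) hR)
  have hRδ : (K + C) * d ≤ δ / 2 * R := by
    rw [div_lt_iff₀ (by positivity)] at hR; linarith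
  obtain ⟨N₀, hN₀⟩ := eventually_atTop.1 <|
    (eventually_all_finset (Fintype.piFinset fun _ : Fin d => Finset.Icc (-(R : ℤ)) R)).2
      fun z _ => eventually_le_exp_of_tendsto (hlyap z) (sub_lt_self _ (half_pos hδ))
  have hray : ∀ m, N₀ ≤ m → ∀ z : Fin d → ℤ, (∀ j, |z j| ≤ R) →
      g (m • z) ≤ exp (-(m * (b (toR z) - δ / 2))) := fun m hm z hz =>
    hN₀ m hm z (Fintype.mem_piFinset.2 fun j => Finset.mem_Icc.2 (abs_le.1 (hz j)))
  refine ⟨max (exp ((K + C) * d * R)) (g 0 * exp ((K + C) * (N₀ * R))), fun x => ?_⟩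
  rcases le_or_gt (N₀ * R) (l1 x) with hx | hx
  · exact (le_exp_of_near_ray hK hC.le hδ.le hlip hb (fun u => (hCb u).2) hR0 hRδ hray hx).trans
      (mul_le_mul_of_nonneg_right (le_max_left _ _) (exp_pos _).le)
  · have hbx : b (toR x) ≤ C * l1 x := by rw [cast_l1]; exact (hCb _).2
    have hx' : (l1 x : ℝ) ≤ N₀ * R := by exact_mod_cast hx.le
    calc g x ≤ exp (K * l1 x) * g 0 := by simpa [l1_neg] using hlip x (-x)
      _ ≤ g 0 * exp ((K + C) * (N₀ * R)) * exp (-b (toR x) + δ * l1 x) := by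
        rw [mul_comm, mul_assoc, ← exp_add]
        gcongr
        · exact hg 0
        · nlinarith [mul_le_mul_of_nonneg_left hx' (add_nonneg hK hC.le),
            (l1 x).cast_nonneg (α := ℝ)]
      _ ≤ _ := mul_le_mul_of_nonneg_right (le_max_right _ _) (exp_pos _).le

theorem summable_exp_dotZ_mul (hK : 0 ≤ K) (hg : ∀ x, 0 ≤ g x)
    (hlip : ∀ x w, g x ≤ exp (K * l1 w) * g (x + w)) (hb : IsEquivNorm b)
    (hlyap : ∀ z, Tendsto (fun N : ℕ => -(1 / (N : ℝ)) * log (g (N • z))) atTop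
      (𝓝 (b (toR z))))
    {h : Fin d → ℝ} (hh : polar b h < 1) : Summable fun x => exp (dotZ h x) * g x := by
  obtain ⟨C, hC, hCb⟩ := hb.exists_sum_abs_le
  set δ := (1 - polar b h) / (2 * C)
  have hδ : 0 < δ := div_pos (sub_pos.2 hh) (by positivity)
  obtain ⟨A, hA⟩ := exists_le_mul_exp_of_lyapunov hK hg hlip hb hlyap hδ
  have hA0 : 0 ≤ A := nonneg_of_mul_nonneg_left ((hg 0).trans (hA 0)) (exp_pos _)
  refine ((summable_exp_neg_mul_l1 hδ).mul_left A).of_nonneg_of_le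
    (fun x => mul_nonneg (exp_pos _).le (hg x)) fun x => ?_
  have hpolar : dotZ h x ≤ polar b h * b (toR x) := hb.dotR_le_polar_mul h (toR x)
  have hn : (l1 x : ℝ) ≤ C * b (toR x) := by rw [cast_l1]; exact (hCb _).1
  have hdecay : 2 * δ * l1 x ≤ (1 - polar b h) * b (toR x) := by
    have h2δ : 2 * δ = (1 - polar b h) / C := by simp only [δ]; field_simp
    calc 2 * δ * l1 x = (1 - polar b h) / C * l1 x := by rw [h2δ]
      _ ≤ (1 - polar b h) / C * (C * b (toR x)) := by gcongr
      _ = (1 - polar b h) * b (toR x) := by field_simp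
  calc exp (dotZ h x) * g x
      ≤ exp (polar b h * b (toR x)) * (A * exp (-b (toR x) + δ * l1 x)) :=
        mul_le_mul (exp_le_exp.2 hpolar) (hA x) (hg x) (exp_pos _).le
    _ = A * exp (-((1 - polar b h) * b (toR x) - δ * l1 x)) := by
        rw [mul_left_comm, ← exp_add]; ring_nf
    _ ≤ A * exp (-(δ * l1 x)) := by gcongr; linarith

theorem tsum_ofReal_exp_dotZ_mul_lt_top {f : (Fin d → ℤ) → ℝ≥0∞} (hf : ∀ x, f x ≠ ⊤)
    (hK : 0 ≤ K) (hstep : ∀ x s, ∑ j, |s j| = 1 → f x ≤ ENNReal.ofReal (exp K) * f (x + s))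
    (hb : IsEquivNorm b)
    (hlyap : ∀ z, Tendsto (fun N : ℕ => -(1 / (N : ℝ)) * log (f (N • z)).toReal) atTop
      (𝓝 (b (toR z))))
    {h : Fin d → ℝ} (hh : polar b h < 1) :
    ∑' x, ENNReal.ofReal (exp (dotZ h x)) * f x < ⊤ := by
  have hlip := le_exp_mul_l1_mul_of_unit_step (g := fun x => (f x).toReal) fun x s hs => by
    simpa [ENNReal.toReal_mul, ENNReal.toReal_ofReal (exp_pos K).le] using
      ENNReal.toReal_mono (ENNReal.mul_ne_top ENNReal.ofReal_ne_top (hf _)) (hstep x s hs)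
  have hsum := summable_exp_dotZ_mul hK (fun _ => ENNReal.toReal_nonneg) hlip hb hlyap hh
  calc ∑' x, ENNReal.ofReal (exp (dotZ h x)) * f x
      = ∑' x, ENNReal.ofReal (exp (dotZ h x) * (f x).toReal) := by
        simp_rw [ENNReal.ofReal_mul (exp_pos _).le, ENNReal.ofReal_toReal (hf _)]
    _ = ENNReal.ofReal (∑' x, exp (dotZ h x) * (f x).toReal) :=
        (ENNReal.ofReal_tsum_of_nonneg (fun _ => by positivity) hsum).symm
    _ < ⊤ := ENNReal.ofReal_lt_top

end Summability

def unitSteps (d : ℕ) : Set (Fin d → ℤ) := {s | ∑ j, |s j| = 1}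

lemma unitSteps_subset_range (d : ℕ) :
    unitSteps d ⊆ Set.range fun p : Fin d × Bool => Pi.single p.1 (if p.2 then 1 else -1) := by
  intro s (hs : ∑ j, |s j| = 1)
  obtain ⟨j, hj⟩ : ∃ j, s j ≠ 0 := by
    by_contra! h
    simp [h] at hs
  have hsplit := Finset.add_sum_erase Finset.univ (fun k => |s k|) (Finset.mem_univ j)
  have hrest : ∑ k ∈ Finset.univ.erase j, |s k| = 0 := by
    linarith [Int.one_le_abs hj, Finset.sum_nonneg fun k (_ : k ∈ Finset.univ.erase j) =>
      abs_nonneg (s k)]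
  have hzero : ∀ k ≠ j, s k = 0 := fun k hk => abs_eq_zero.1 <|
    (Finset.sum_eq_zero_iff_of_nonneg fun _ _ => abs_nonneg _).1 hrest k (by simp [hk])
  have hsingle : s = Pi.single j (s j) := by
    funext k
    by_cases hk : k = j
    · subst hk; simp
    · simp [hk, hzero k hk]
  rcases abs_eq (zero_le_one' ℤ) |>.1 (by linarith : |s j| = 1) with h | h
  · exact ⟨(j, true), by rw [hsingle, h]; rfl⟩
  · exact ⟨(j, false), by rw [hsingle, h]; rfl⟩

instance finite_unitSteps (d : ℕ) : Finite (unitSteps d) :=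
  ((Set.finite_range _).subset (unitSteps_subset_range d)).to_subtype

lemma natCard_unitSteps_le (d : ℕ) : Nat.card (unitSteps d) ≤ 2 * d :=
  calc Nat.card (unitSteps d) ≤ Nat.card (Set.range _) :=
        Nat.card_mono (Set.finite_range _) (unitSteps_subset_range d)
    _ ≤ Nat.card (Fin d × Bool) := Finite.card_range_le _
    _ = 2 * d := by simp; ring

namespace Polymer

variable {d : ℕ}

lemma ext_of_le_len {γ γ' : Polymer d} (hlen : γ.len = γ'.len)
    (hpath : ∀ i ≤ γ.len, γ.path i = γ'.path i) : γ = γ' := by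
  obtain ⟨n, p, _, _, hp⟩ := γ
  obtain ⟨n', p', _, _, hp'⟩ := γ'
  obtain rfl : n = n' := hlen
  obtain rfl : p = p' := funext fun i => by
    rcases le_or_gt i n with hi | hi
    · exact hpath i hi
    · rw [hp i hi.le, hp' i hi.le]; exact hpath n le_rfl
  rfl

def increments {n : ℕ} (γ : {γ : Polymer d // γ.len = n}) : Fin n → unitSteps d :=
  fun i => ⟨γ.1.path (i + 1) - γ.1.path i, γ.1.step i (γ.2.symm ▸ i.2)⟩

lemma increments_injective (n : ℕ) : Function.Injective (increments (d := d) (n := n)) := by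
  rintro ⟨γ, rfl⟩ ⟨γ', hγ'⟩ h
  refine Subtype.ext (ext_of_le_len hγ'.symm fun i hi => ?_)
  induction i with
  | zero => rw [γ.start, γ'.start]
  | succ i ih =>
    have hstep := congrArg Subtype.val (congrFun h ⟨i, hi⟩)
    simp only [increments] at hstep
    rw [← sub_add_cancel (γ.path (i + 1)) (γ.path i), hstep, ih (by omega), sub_add_cancel]

instance finite_len_eq (n : ℕ) : Finite {γ : Polymer d // γ.len = n} :=
  Finite.of_injective _ (increments_injective n)

lemma natCard_len_eq_le (n : ℕ) : Nat.card {γ : Polymer d // γ.len = n} ≤ (2 * d) ^ n := by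
  calc Nat.card {γ : Polymer d // γ.len = n}
      ≤ Nat.card (Fin n → unitSteps d) :=
        Nat.card_le_card_of_injective _ (increments_injective n)
    _ ≤ (2 * d) ^ n := by
        rw [Nat.card_fun, Nat.card_fin]
        exact Nat.pow_le_pow_left (natCard_unitSteps_le d) n

lemma tsum_pow_len_le (r : ℝ≥0∞) : ∑' γ : Polymer d, r ^ γ.len ≤ ∑' n : ℕ, (2 * d * r) ^ n := by
  rw [← (Equiv.sigmaFiberEquiv fun γ : Polymer d => γ.len).tsum_eq, ENNReal.tsum_sigma']
  refine ENNReal.tsum_le_tsum fun n => ?_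
  calc ∑' γ : {γ : Polymer d // γ.len = n}, r ^ γ.1.len
      = ∑' _ : {γ : Polymer d // γ.len = n}, r ^ n := tsum_congr fun γ => by rw [γ.2]
    _ = Nat.card {γ : Polymer d // γ.len = n} * r ^ n := by
        cases nonempty_fintype {γ : Polymer d // γ.len = n}
        simp [tsum_fintype, Nat.card_eq_fintype_card]
    _ ≤ (2 * d * r) ^ n := by
        rw [mul_pow]
        gcongr
        exact_mod_cast natCard_len_eq_le n

def snoc (γ : Polymer d) (s : Fin d → ℤ) (hs : ∑ j, |s j| = 1) : Polymer d where
  len := γ.len + 1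
  path i := if i ≤ γ.len then γ.path i else γ.X + s
  start := by simp [γ.start]
  step i hi := by
    rcases Nat.lt_or_ge i γ.len with h | h
    · simpa [h.le, Nat.succ_le_of_lt h] using γ.step i h
    · obtain rfl : i = γ.len := by omega
      simpa [X] using hs
  frozen i hi := by simp [show ¬i ≤ γ.len by omega]

lemma snoc_path_of_le (γ : Polymer d) {s : Fin d → ℤ} (hs : ∑ j, |s j| = 1) {i : ℕ}
    (hi : i ≤ γ.len) : (γ.snoc s hs).path i = γ.path i := if_pos hi

lemma snoc_X (γ : Polymer d) {s : Fin d → ℤ} (hs : ∑ j, |s j| = 1) :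
    (γ.snoc s hs).X = γ.X + s := if_neg (by simp [snoc])

lemma snoc_injective {s : Fin d → ℤ} (hs : ∑ j, |s j| = 1) :
    Function.Injective fun γ : Polymer d => γ.snoc s hs := by
  intro γ γ' h
  have hlen : γ.len = γ'.len := Nat.succ_injective (congrArg len h)
  refine ext_of_le_len hlen fun i hi => ?_
  rw [← snoc_path_of_le γ hs hi, ← snoc_path_of_le γ' hs (hlen ▸ hi),
    show γ.snoc s hs = γ'.snoc s hs from h]

end Polymer

section PartitionFunction

variable {d : ℕ} {β lam : ℝ} {v : (Fin d → ℤ) → ℝ}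

lemma qweight_le (hβ : 0 ≤ β) (hv : ∀ z, 0 ≤ v z) (γ : Polymer d) :
    qweight β lam 0 v γ ≤ ENNReal.ofReal (exp (-lam) / (2 * d)) ^ γ.len := by
  have hexp : exp (dotZ 0 γ.X - lam * γ.len - β * ∑ i ∈ Finset.Icc 1 γ.len, v (γ.path i))
      ≤ exp (-lam) ^ γ.len := by
    have : 0 ≤ β * ∑ i ∈ Finset.Icc 1 γ.len, v (γ.path i) :=
      mul_nonneg hβ (Finset.sum_nonneg fun _ _ => hv _)
    rw [← exp_nat_mul]
    refine exp_le_exp.2 ?_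
    simp only [dotZ, Pi.zero_apply, zero_mul, Finset.sum_const_zero]
    linarith
  rw [qweight, ← ENNReal.ofReal_pow (by positivity), div_eq_mul_one_div (exp (-lam)), mul_pow]
  exact ENNReal.ofReal_le_ofReal (by gcongr)

lemma qpart_le (hβ : 0 ≤ β) (hv : ∀ z, 0 ≤ v z) (x : Fin d → ℤ) :
    Qpart β lam v x ≤ (1 - ENNReal.ofReal (exp (-lam)))⁻¹ := by
  set r := ENNReal.ofReal (exp (-lam) / (2 * d))
  have hr : 2 * d * r ≤ ENNReal.ofReal (exp (-lam)) := by
    rw [show (2 * d : ℝ≥0∞) = ENNReal.ofReal (2 * d) by simp, ← ENNReal.ofReal_mul (by positivity)]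
    refine ENNReal.ofReal_le_ofReal ?_
    rcases Nat.eq_zero_or_pos d with rfl | hd
    · simp [(exp_pos _).le]
    · rw [mul_div_cancel₀ _ (by positivity)]
  calc Qpart β lam v x ≤ ∑' γ : {γ : Polymer d // γ.X = x}, r ^ γ.1.len :=
        ENNReal.tsum_le_tsum fun γ => qweight_le hβ hv γ.1
    _ ≤ ∑' γ : Polymer d, r ^ γ.len :=
        ENNReal.tsum_comp_le_tsum_of_injective Subtype.val_injective _
    _ ≤ ∑' n : ℕ, (2 * d * r) ^ n := Polymer.tsum_pow_len_le r
    _ ≤ ∑' n : ℕ, ENNReal.ofReal (exp (-lam)) ^ n := ENNReal.tsum_le_tsum fun n => by gcongr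
    _ = (1 - ENNReal.ofReal (exp (-lam)))⁻¹ := ENNReal.tsum_geometric _

lemma inv_one_sub_ofReal_exp_neg_lt_top (hlam : 0 < lam) :
    (1 - ENNReal.ofReal (exp (-lam)))⁻¹ < ⊤ :=
  ENNReal.inv_lt_top.2 <| tsub_pos_of_lt <|
    ENNReal.ofReal_lt_one.2 (exp_lt_one_iff.2 (neg_lt_zero.2 hlam))

lemma qpart_lt_top (hβ : 0 ≤ β) (hv : ∀ z, 0 ≤ v z) (hlam : 0 < lam) (x : Fin d → ℤ) :
    Qpart β lam v x < ⊤ :=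
  (qpart_le hβ hv x).trans_lt (inv_one_sub_ofReal_exp_neg_lt_top hlam)

lemma qweight_snoc (γ : Polymer d) {s : Fin d → ℤ} (hs : ∑ j, |s j| = 1) :
    qweight β lam 0 v (γ.snoc s hs) =
      ENNReal.ofReal (exp (-lam - β * v (γ.X + s)) / (2 * d)) * qweight β lam 0 v γ := by
  have hsum : ∑ i ∈ Finset.Icc 1 (γ.len + 1), v ((γ.snoc s hs).path i)
      = ∑ i ∈ Finset.Icc 1 γ.len, v (γ.path i) + v (γ.X + s) := by
    have hlast : (γ.snoc s hs).path (γ.len + 1) = γ.X + s := Polymer.snoc_X γ hs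
    rw [Finset.sum_Icc_succ_top (by omega), hlast]
    congr 1
    exact Finset.sum_congr rfl fun i hi =>
      by rw [Polymer.snoc_path_of_le γ hs (Finset.mem_Icc.1 hi).2]
  have hlen : (γ.snoc s hs).len = γ.len + 1 := rfl
  rw [qweight, qweight, ← ENNReal.ofReal_mul (by positivity), hlen, hsum]
  congr 1
  simp only [dotZ, Pi.zero_apply, zero_mul, Finset.sum_const_zero]
  rw [show 0 - lam * ↑(γ.len + 1) - β * (∑ i ∈ Finset.Icc 1 γ.len, v (γ.path i) + v (γ.X + s))
      = (-lam - β * v (γ.X + s)) + (0 - lam * γ.len - β * ∑ i ∈ Finset.Icc 1 γ.len, v (γ.path i))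
      by push_cast; ring, exp_add, pow_succ]
  ring

lemma qpart_le_mul_qpart_add {M : ℝ} (hβ : 0 ≤ β) (hvM : ∀ z, v z ≤ M) (x : Fin d → ℤ)
    {s : Fin d → ℤ} (hs : ∑ j, |s j| = 1) :
    Qpart β lam v x ≤ ENNReal.ofReal (exp (lam + β * M + log (2 * d))) * Qpart β lam v (x + s) := by
  have hd : (0 : ℝ) < 2 * d := by
    rcases Nat.eq_zero_or_pos d with rfl | hd
    · simp at hs
    · positivity
  set κ := ENNReal.ofReal (exp (lam + β * M + log (2 * d)))
  have hκ : ∀ γ : Polymer d, qweight β lam 0 v γ ≤ κ * qweight β lam 0 v (γ.snoc s hs) := by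
    intro γ
    rw [qweight_snoc, ← mul_assoc, ← ENNReal.ofReal_mul (exp_pos _).le]
    refine le_mul_of_one_le_left zero_le (ENNReal.one_le_ofReal.2 ?_)
    rw [mul_div_assoc', le_div_iff₀ hd, one_mul, ← exp_add,
      show lam + β * M + log (2 * d) + (-lam - β * v (γ.X + s))
        = β * (M - v (γ.X + s)) + log (2 * d) by ring, exp_add, exp_log hd]
    exact le_mul_of_one_le_left hd.le (one_le_exp (mul_nonneg hβ (sub_nonneg.2 (hvM _))))
  calc Qpart β lam v x
      ≤ ∑' γ : {γ : Polymer d // γ.X = x}, κ * qweight β lam 0 v (γ.1.snoc s hs) :=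
        ENNReal.tsum_le_tsum fun γ => hκ γ.1
    _ = κ * ∑' γ : {γ : Polymer d // γ.X = x}, qweight β lam 0 v (γ.1.snoc s hs) :=
        ENNReal.tsum_mul_left
    _ ≤ κ * Qpart β lam v (x + s) := by
        gcongr
        exact ENNReal.tsum_comp_le_tsum_of_injective
          (f := fun γ : {γ : Polymer d // γ.X = x} =>
            (⟨γ.1.snoc s hs, by rw [Polymer.snoc_X, γ.2]⟩ : {γ : Polymer d // γ.X = x + s}))
          (fun γ γ' h => Subtype.ext (Polymer.snoc_injective hs (congrArg Subtype.val h)))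
          fun γ => qweight β lam 0 v γ.1

end PartitionFunction

section Annealed

variable {d : ℕ} (Pr : Measure Ω) (env : Environment d Pr) {β lam : ℝ}

lemma apart_lt_top [IsProbabilityMeasure Pr] (hβ : 0 ≤ β) (hlam : 0 < lam) (x : Fin d → ℤ) :
    Apart Pr env β lam x < ⊤ := by
  calc Apart Pr env β lam x ≤ ∫⁻ _, (1 - ENNReal.ofReal (exp (-lam)))⁻¹ ∂Pr :=
        lintegral_mono fun ω => qpart_le hβ (fun z => env.nonneg z ω) x
    _ < ⊤ := by
        rw [lintegral_const, measure_univ, mul_one]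
        exact inv_one_sub_ofReal_exp_neg_lt_top hlam

lemma apart_le_mul_apart_add {M : ℝ} (hβ : 0 ≤ β) (hvM : ∀ z ω, env.V z ω ≤ M)
    (x : Fin d → ℤ) {s : Fin d → ℤ} (hs : ∑ j, |s j| = 1) :
    Apart Pr env β lam x ≤
      ENNReal.ofReal (exp (lam + β * M + log (2 * d))) * Apart Pr env β lam (x + s) := by
  rw [Apart, Apart, ← lintegral_const_mul' _ _ ENNReal.ofReal_ne_top]
  exact lintegral_mono fun ω => qpart_le_mul_qpart_add hβ (fun z => hvM z ω) x hs

end Annealed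

/-- For `λ > 0`, `β ≥ 0`: if `𝔞*_λ(h) < 1` then
`Σ_x e^{h·x} A_λ(x) < ∞`; analogously, if `𝔮*_λ(h) < 1` then `ℙ`-a.s.
`Σ_x e^{h·x} Q_λ(x) < ∞`. -/
theorem subcritical_summability
    {d : ℕ} {Ω : Type*} [MeasurableSpace Ω] (Pr : Measure Ω) [IsProbabilityMeasure Pr]
    (env : Environment d Pr) (β lam : ℝ) (hβ : 0 ≤ β) (hlam : 0 < lam)
    (a q : (Fin d → ℝ) → ℝ)
    (haL : IsAnnealedLyapunov Pr env β lam a) (haN : IsEquivNorm a)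
    (hqL : IsQuenchedLyapunov Pr env β lam q) (hqN : IsEquivNorm q)
    (h : Fin d → ℝ) :
    (polar a h < 1 →
      (∑' x : Fin d → ℤ, ENNReal.ofReal (Real.exp (dotZ h x)) * Apart Pr env β lam x) < ⊤) ∧
    (polar q h < 1 →
      ∀ᵐ ω ∂Pr,
        (∑' x : Fin d → ℤ,
          ENNReal.ofReal (Real.exp (dotZ h x)) * Qpart β lam (fun z => env.V z ω) x) < ⊤) := by
  obtain ⟨M, hM⟩ := env.bounded
  have hvM : ∀ z ω, env.V z ω ≤ max M 0 := fun z ω => (hM z ω).trans (le_max_left _ _)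
  have hK : 0 ≤ lam + β * max M 0 + log (2 * d) :=
    add_nonneg (add_nonneg hlam.le (mul_nonneg hβ (le_max_right _ _)))
      (by exact_mod_cast log_natCast_nonneg (2 * d))
  refine ⟨fun ha => ?_, fun hq => ?_⟩
  · exact tsum_ofReal_exp_dotZ_mul_lt_top (fun x => (apart_lt_top Pr env hβ hlam x).ne) hK
      (fun x _ hs => apart_le_mul_apart_add Pr env hβ hvM x hs) haN haL ha
  · filter_upwards [hqL] with ω hω
    exact tsum_ofReal_exp_dotZ_mul_lt_top
      (fun x => (qpart_lt_top hβ (fun z => env.nonneg z ω) hlam x).ne) hK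
      (fun x _ hs => qpart_le_mul_qpart_add hβ (fun z => hvM z ω) x hs) hqN hω hq
end
end

section
/- Transfer of exponential decay under weak disorder (Lemma 10): Let β ≥ 0 and h ∈ ℝ^d, and assume weak disorder at (h, β): ℙ-almost surely lim_{n→∞} (1/n) log Q_n(h) exists and equals Λ_a(h) = lim_{n→∞} (1/n) log A_n(h). Let (E_n)_{n≥1} be sets of polymers of length n such that 𝔸_n^h(E_n) ≤ e^{−cn} for some constant c > 0 and all n large enough. Then there exists c' > 0 such that, ℙ-almost surely, ℚ_n^h(E_n) ≤ e^{−c'n} for all n large enough. -/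
open MeasureTheory ProbabilityTheory Real Filter Topology
open scoped ENNReal NNReal BigOperators Classical

noncomputable section

variable {Ω : Type*} [MeasurableSpace Ω]

/-!
By Markov's inequality, `ℙ(Q_n(h; E_n) > e^{-cn/2} A_n(h)) ≤ e^{cn/2} 𝔸_n^h(E_n) ≤ e^{-cn/2}`,
which is summable, so by Borel–Cantelli almost surely `Q_n(h; E_n) ≤ e^{-cn/2} A_n(h)` for all
large `n`. Under weak disorder `Q_n(h)` and `A_n(h)` both grow like `e^{Λn + o(n)}`, hence
`ℚ_n^h(E_n) = Q_n(h; E_n) / Q_n(h) ≤ e^{-cn/4}` eventually. The partition functions are finite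
sums over the finitely many polymers of length `n`, and `A_n(h)` is finite because `V` is bounded.
-/
namespace Polymer

variable {d : ℕ}

theorem abs_path_succ_sub_le_one (γ : Polymer d) (i : ℕ) (j : Fin d) :
    |γ.path (i + 1) j - γ.path i j| ≤ 1 := by
  rcases lt_or_ge i γ.len with hi | hi
  · rw [← γ.step i hi]
    exact Finset.single_le_sum (f := fun k => |γ.path (i + 1) k - γ.path i k|)
      (fun k _ => abs_nonneg _) (Finset.mem_univ j)
  · simp [γ.frozen i hi, γ.frozen (i + 1) (by omega)]

theorem abs_path_le (γ : Polymer d) (i : ℕ) (j : Fin d) : |γ.path i j| ≤ i := by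
  induction i with
  | zero => simp [γ.start]
  | succ i ih =>
    have := abs_sub_abs_le_abs_sub (γ.path (i + 1) j) (γ.path i j)
    have := γ.abs_path_succ_sub_le_one i j
    push_cast
    linarith

/-- A polymer of length `n` is determined by its first `n + 1` positions, which lie in the box
`[-n, n]^d`. -/
instance finite_len (n : ℕ) : Finite {γ : Polymer d // γ.len = n} := by
  let box (γ : {γ : Polymer d // γ.len = n}) (i : Fin (n + 1)) (j : Fin d) :
      Set.Icc (-(n : ℤ)) n :=
    ⟨γ.1.path i j, abs_le.1 ((γ.1.abs_path_le i j).trans (by exact_mod_cast i.is_le))⟩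
  refine Finite.of_injective box fun ⟨γ₁, h₁⟩ ⟨γ₂, h₂⟩ hbox => ?_
  have hle : ∀ i ≤ n, γ₁.path i = γ₂.path i := fun i hi =>
    funext fun j => congrArg Subtype.val (congrFun (congrFun hbox ⟨i, by omega⟩) j)
  have hpath : γ₁.path = γ₂.path := funext fun i => by
    rcases le_or_gt i n with hi | hi
    · exact hle i hi
    · rw [γ₁.frozen i (by omega), γ₂.frozen i (by omega), h₁, h₂, hle n le_rfl]
  have hlen : γ₁.len = γ₂.len := h₁.trans h₂.symm
  cases γ₁; cases γ₂
  subst hlen hpath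
  rfl

instance finite_len_and (n : ℕ) (p : Polymer d → Prop) :
    Finite {γ : Polymer d // γ.len = n ∧ p γ} :=
  Finite.of_injective (fun γ => (⟨γ.1, γ.2.1⟩ : {γ : Polymer d // γ.len = n}))
    fun _ _ hγ => Subtype.ext (congrArg (fun γ : {γ : Polymer d // γ.len = n} => γ.1) hγ)

end Polymer

section PartitionFunction

variable {d : ℕ}

theorem qweight_le_qweight_const (β lam : ℝ) (h : Fin d → ℝ) {v : (Fin d → ℤ) → ℝ} {M : ℝ}
    (hv : ∀ z, |v z| ≤ M) (γ : Polymer d) :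
    qweight β lam h v γ ≤ qweight (-|β|) lam h (fun _ => M) γ := by
  refine ENNReal.ofReal_le_ofReal (mul_le_mul_of_nonneg_right (exp_le_exp.2 ?_) (by positivity))
  have hsum : |∑ i ∈ Finset.Icc 1 γ.len, v (γ.path i)| ≤ ∑ i ∈ Finset.Icc 1 γ.len, M :=
    (Finset.abs_sum_le_sum_abs _ _).trans (Finset.sum_le_sum fun i _ => hv _)
  have := neg_abs_le (β * ∑ i ∈ Finset.Icc 1 γ.len, v (γ.path i))
  rw [abs_mul] at this
  nlinarith [abs_nonneg β]

theorem QpartLen_ne_top (β : ℝ) (h : Fin d → ℝ) (v : (Fin d → ℤ) → ℝ) (n : ℕ) :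
    QpartLen β h v n ≠ ⊤ := by
  have := Fintype.ofFinite {γ : Polymer d // γ.len = n}
  rw [QpartLen, tsum_fintype]
  exact ENNReal.sum_ne_top.2 fun _ _ => ENNReal.ofReal_ne_top

theorem QpartLenE_le_QpartLen (β : ℝ) (h : Fin d → ℝ) (v : (Fin d → ℤ) → ℝ) (n : ℕ)
    (E : Set (Polymer d)) : QpartLenE β h v n E ≤ QpartLen β h v n :=
  ENNReal.tsum_mono_subtype (qweight β 0 h v) (s := {γ | γ.len = n ∧ γ ∈ E})
    (t := {γ | γ.len = n}) fun _ hγ => hγ.1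

theorem measurable_QpartLenE {V : (Fin d → ℤ) → Ω → ℝ} (hV : ∀ x, Measurable (V x))
    (β : ℝ) (h : Fin d → ℝ) (n : ℕ) (E : Set (Polymer d)) :
    Measurable fun ω => QpartLenE β h (fun z => V z ω) n E :=
  Measurable.tsum fun _ => ENNReal.measurable_ofReal.comp <|
    (measurable_const.sub ((Finset.measurable_sum _ fun _ _ => hV _).const_mul β)).exp.mul_const _

theorem lintegral_QpartLen_ne_top (μ : Measure Ω) [IsFiniteMeasure μ]
    {V : (Fin d → ℤ) → Ω → ℝ} {M : ℝ} (hV : ∀ x ω, |V x ω| ≤ M)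
    (β : ℝ) (h : Fin d → ℝ) (n : ℕ) :
    ∫⁻ ω, QpartLen β h (fun z => V z ω) n ∂μ ≠ ⊤ := by
  refine ne_top_of_le_ne_top (b := ∫⁻ _, QpartLen (-|β|) h (fun _ => M) n ∂μ) ?_ ?_
  · rw [lintegral_const]
    exact ENNReal.mul_ne_top (QpartLen_ne_top _ _ _ _) (measure_ne_top _ _)
  · exact lintegral_mono fun ω =>
      ENNReal.tsum_le_tsum fun γ => qweight_le_qweight_const β 0 h (hV · ω) γ

end PartitionFunction

section Transfer

variable {μ : Measure Ω}

-- Markov's inequality, with a strict inequality so that it still holds when `a = 0`.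
theorem measure_mul_lt_le {f : Ω → ℝ≥0∞} (hf : AEMeasurable f μ) {r s a : ℝ≥0∞}
    (hs₀ : s ≠ 0) (hs : s ≠ ⊤) (ha : a ≠ ⊤) (h : ∫⁻ x, f x ∂μ ≤ r * s * a) :
    μ {x | s * a < f x} ≤ r := by
  rcases eq_or_ne a 0 with rfl | ha₀
  · have hf₀ : f =ᵐ[μ] 0 := (lintegral_eq_zero_iff' hf).1 (by simpa using h)
    have : μ {x | 0 < f x} = 0 :=
      measure_eq_zero_iff_ae_notMem.2 (hf₀.mono fun x hx => by simp [hx])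
    simp [this]
  · have hsa₀ : s * a ≠ 0 := mul_ne_zero hs₀ ha₀
    have hsa : s * a ≠ ⊤ := ENNReal.mul_ne_top hs ha
    calc μ {x | s * a < f x} ≤ μ {x | s * a ≤ f x} := measure_mono fun x (hx : s * a < f x) => hx.le
      _ ≤ (∫⁻ x, f x ∂μ) / (s * a) := meas_ge_le_lintegral_div hf hsa₀ hsa
      _ ≤ r * s * a / (s * a) := ENNReal.div_le_div_right h _
      _ = r := by rw [mul_assoc, ENNReal.mul_div_cancel_right hsa₀ hsa]

theorem ae_eventually_notMem_of_le_geometric {S : ℕ → Set Ω} {r : ℝ≥0∞} (hr : r < 1)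
    (hS : ∀ᶠ n in atTop, μ (S n) ≤ r ^ n) : ∀ᵐ ω ∂μ, ∀ᶠ n in atTop, ω ∉ S n := by
  obtain ⟨N, hN⟩ := eventually_atTop.1 hS
  let T (n : ℕ) : Set Ω := if N ≤ n then S n else ∅
  have hT : ∑' n, μ (T n) ≠ ⊤ := by
    refine ne_top_of_le_ne_top (b := ∑' n, r ^ n) ?_ (ENNReal.tsum_le_tsum fun n => ?_)
    · rw [ENNReal.tsum_geometric]
      exact ENNReal.inv_ne_top.2 (tsub_pos_of_lt hr).ne'
    · by_cases hn : N ≤ n <;> simp [T, hn, hN]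
  filter_upwards [ae_eventually_notMem hT] with ω hω
  filter_upwards [hω, eventually_ge_atTop N] with n hn hNn
  simpa [T, hNn] using hn

theorem ofReal_exp_mul_natCast (t : ℝ) (n : ℕ) :
    ENNReal.ofReal (exp (t * n)) = ENNReal.ofReal (exp t) ^ n := by
  rw [← ENNReal.ofReal_pow (exp_nonneg _), ← exp_nat_mul, mul_comm]

-- Markov's inequality at the threshold `e^{-cn/2} a n`, then Borel–Cantelli.
theorem ae_eventually_le_of_lintegral_le_exp {f : ℕ → Ω → ℝ≥0∞}
    (hf : ∀ n, AEMeasurable (f n) μ) {a : ℕ → ℝ≥0∞} (ha : ∀ n, a n ≠ ⊤) {c : ℝ} (hc : 0 < c)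
    (h : ∀ᶠ n : ℕ in atTop, ∫⁻ ω, f n ω ∂μ ≤ ENNReal.ofReal (exp (-c * n)) * a n) :
    ∀ᵐ ω ∂μ, ∀ᶠ n : ℕ in atTop, f n ω ≤ ENNReal.ofReal (exp (-(c / 2) * n)) * a n := by
  set r := ENNReal.ofReal (exp (-(c / 2)))
  have hr : r < 1 := ENNReal.ofReal_lt_one.2 (exp_lt_one_iff.2 (by linarith))
  have hS : ∀ᶠ n : ℕ in atTop, μ {ω | r ^ n * a n < f n ω} ≤ r ^ n := by
    filter_upwards [h] with n hn
    refine measure_mul_lt_le (hf n) (pow_ne_zero _ (by simp [r, exp_pos]))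
      (ENNReal.pow_ne_top hr.ne_top) (ha n) ?_
    rwa [← pow_add, ← ofReal_exp_mul_natCast, ← two_mul, Nat.cast_mul, Nat.cast_two,
      show -(c / 2) * (2 * n) = -c * n by ring]
  filter_upwards [ae_eventually_notMem_of_le_geometric hr hS] with ω hω
  filter_upwards [hω] with n hn
  rw [ofReal_exp_mul_natCast]
  exact not_lt.1 hn

theorem eventually_le_ofReal_exp_of_tendsto_log {a : ℕ → ℝ≥0∞} (ha : ∀ n, a n ≠ ⊤) {Λ : ℝ}
    (h : Tendsto (fun n : ℕ => 1 / (n : ℝ) * log (a n).toReal) atTop (𝓝 Λ)) {ε : ℝ}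
    (hε : 0 < ε) : ∀ᶠ n : ℕ in atTop, a n ≤ ENNReal.ofReal (exp ((Λ + ε) * n)) := by
  filter_upwards [h.eventually (eventually_lt_nhds (by linarith : Λ < Λ + ε)),
    eventually_gt_atTop 0] with n hn hn₀
  rw [one_div, inv_mul_lt_iff₀ (by exact_mod_cast hn₀), mul_comm] at hn
  rw [← ENNReal.ofReal_toReal (ha n)]
  exact ENNReal.ofReal_le_ofReal ((le_exp_log _).trans (exp_le_exp.2 hn.le))

theorem eventually_eq_zero_or_ofReal_exp_le_of_tendsto_log {a : ℕ → ℝ≥0∞} (ha : ∀ n, a n ≠ ⊤)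
    {Λ : ℝ} (h : Tendsto (fun n : ℕ => 1 / (n : ℝ) * log (a n).toReal) atTop (𝓝 Λ)) {ε : ℝ}
    (hε : 0 < ε) : ∀ᶠ n : ℕ in atTop, a n = 0 ∨ ENNReal.ofReal (exp ((Λ - ε) * n)) ≤ a n := by
  filter_upwards [h.eventually (eventually_gt_nhds (by linarith : Λ - ε < Λ)),
    eventually_gt_atTop 0] with n hn hn₀
  rw [one_div, lt_inv_mul_iff₀ (by exact_mod_cast hn₀), mul_comm] at hn
  rcases eq_or_ne (a n) 0 with ha₀ | ha₀
  · exact .inl ha₀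
  · right
    rw [← ENNReal.ofReal_toReal (ha n)]
    refine ENNReal.ofReal_le_ofReal ((exp_le_exp.2 hn.le).trans (exp_log ?_).le)
    exact ENNReal.toReal_pos ha₀ (ha n)

theorem eventually_div_le_ofReal_exp {q qE a : ℕ → ℝ≥0∞} (hqE : ∀ n, qE n ≤ q n)
    (hq : ∀ n, q n ≠ ⊤) (ha : ∀ n, a n ≠ ⊤) {Λ c : ℝ}
    (hqΛ : Tendsto (fun n : ℕ => 1 / (n : ℝ) * log (q n).toReal) atTop (𝓝 Λ))
    (haΛ : Tendsto (fun n : ℕ => 1 / (n : ℝ) * log (a n).toReal) atTop (𝓝 Λ)) (hc : 0 < c)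
    (h : ∀ᶠ n : ℕ in atTop, qE n ≤ ENNReal.ofReal (exp (-c * n)) * a n) :
    ∀ᶠ n : ℕ in atTop, qE n / q n ≤ ENNReal.ofReal (exp (-(c / 2) * n)) := by
  have hε : 0 < c / 4 := by positivity
  filter_upwards [h, eventually_le_ofReal_exp_of_tendsto_log ha haΛ hε,
    eventually_eq_zero_or_ofReal_exp_le_of_tendsto_log hq hqΛ hε] with n hn han hqn
  rcases hqn with hq₀ | hqn
  · simp [hq₀, nonpos_iff_eq_zero.1 ((hqE n).trans hq₀.le)]
  · calc qE n / q n
        ≤ ENNReal.ofReal (exp (-c * n)) * ENNReal.ofReal (exp ((Λ + c / 4) * n)) /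
            ENNReal.ofReal (exp ((Λ - c / 4) * n)) :=
          ENNReal.div_le_div (hn.trans (mul_le_mul_right han _)) hqn
      _ = ENNReal.ofReal (exp (-(c / 2) * n)) := by
          rw [← ENNReal.ofReal_mul (exp_nonneg _), ← ENNReal.ofReal_div_of_pos (exp_pos _),
            ← exp_add, ← exp_sub]
          ring_nf

end Transfer

theorem weak_disorder_exponential_transfer_general
    {d : ℕ} {Ω : Type*} [MeasurableSpace Ω] (Pr : Measure Ω) [IsProbabilityMeasure Pr]
    (env : Environment d Pr) (β : ℝ) (h : Fin d → ℝ) (Λ : ℝ)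
    (hA : Tendsto (fun n : ℕ => (1 / (n : ℝ)) * Real.log (ApartLen Pr env β h n).toReal)
      atTop (𝓝 Λ))
    (hQ : ∀ᵐ ω ∂Pr,
      Tendsto (fun n : ℕ =>
          (1 / (n : ℝ)) * Real.log (QpartLen β h (fun z => env.V z ω) n).toReal)
        atTop (𝓝 Λ))
    (E : ℕ → Set (Polymer d)) (c : ℝ) (hc : 0 < c)
    (hE : ∀ᶠ n : ℕ in atTop,
      AmeasLen Pr env β h n (E n) ≤ ENNReal.ofReal (Real.exp (-c * n))) :
    ∃ c' : ℝ, 0 < c' ∧ ∀ᵐ ω ∂Pr, ∀ᶠ n : ℕ in atTop,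
      Qmeas β h (fun z => env.V z ω) n (E n) ≤ ENNReal.ofReal (Real.exp (-c' * n)) := by
  obtain ⟨M, hM⟩ := env.bounded
  have hA_ne_top (n : ℕ) : ApartLen Pr env β h n ≠ ⊤ :=
    lintegral_QpartLen_ne_top Pr (M := M)
      (fun x ω => (abs_of_nonneg (env.nonneg x ω)).trans_le (hM x ω)) β h n
  have hAE : ∀ᶠ n : ℕ in atTop,
      ApartLenE Pr env β h n (E n) ≤ ENNReal.ofReal (exp (-c * n)) * ApartLen Pr env β h n :=
    hE.mono fun n hn =>
      (ENNReal.div_le_iff_le_mul (.inr ENNReal.ofReal_ne_top) (.inl (hA_ne_top n))).1 hn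
  have hQE := ae_eventually_le_of_lintegral_le_exp
    (fun n => (measurable_QpartLenE env.meas β h n (E n)).aemeasurable) hA_ne_top hc hAE
  refine ⟨c / 2 / 2, by positivity, ?_⟩
  filter_upwards [hQ, hQE] with ω hQω hQEω
  exact eventually_div_le_ofReal_exp (fun n => QpartLenE_le_QpartLen β h _ n (E n))
    (fun n => QpartLen_ne_top β h _ n) hA_ne_top hQω hA (by positivity) hQEω

/-- Transfer of exponential decay under weak disorder (Lemma 10): if
`ℙ`-a.s. `lim (1/n) log Q_n(h) = Λ_a(h) = lim (1/n) log A_n(h)`, and `(E_n)` are events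
with `𝔸_n^h(E_n) ≤ e^{−cn}` for some `c > 0` and all large `n`, then there is `c' > 0`
such that `ℙ`-a.s. `ℚ_n^h(E_n) ≤ e^{−c'n}` for all large `n`. -/
theorem weak_disorder_exponential_transfer
    {d : ℕ} {Ω : Type*} [MeasurableSpace Ω] (Pr : Measure Ω) [IsProbabilityMeasure Pr]
    (env : Environment d Pr) (β : ℝ) (hβ : 0 ≤ β) (h : Fin d → ℝ) (Λ : ℝ)
    (hA : Tendsto (fun n : ℕ => (1 / (n : ℝ)) * Real.log (ApartLen Pr env β h n).toReal)
      atTop (𝓝 Λ))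
    (hQ : ∀ᵐ ω ∂Pr,
      Tendsto (fun n : ℕ =>
          (1 / (n : ℝ)) * Real.log (QpartLen β h (fun z => env.V z ω) n).toReal)
        atTop (𝓝 Λ))
    (E : ℕ → Set (Polymer d)) (c : ℝ) (hc : 0 < c)
    (hE : ∀ᶠ n : ℕ in atTop,
      AmeasLen Pr env β h n (E n) ≤ ENNReal.ofReal (Real.exp (-c * n))) :
    ∃ c' : ℝ, 0 < c' ∧ ∀ᵐ ω ∂Pr, ∀ᶠ n : ℕ in atTop,
      Qmeas β h (fun z => env.V z ω) n (E n) ≤ ENNReal.ofReal (Real.exp (-c' * n)) :=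
  weak_disorder_exponential_transfer_general Pr env β h Λ hA hQ E c hc hE
end
end
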